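/- (Uniqueness of the Kodama-like field among timelike Killing fields.) Fix m > 0, a ∈ ℝ, ϑ ∈ (0,π), and V ∈ ℝ with V ≠ 0. For r > 0 define L(r) := (2·m·r·a·V − (ρ²/sinϑ)·√(V²·Δ)) / (Γ·ρ² + 2·m·r·a²·sin²ϑ) and U(r) := (2·m·r·a·V + (ρ²/sinϑ)·√(V²·Δ)) / (Γ·ρ² + 2·m·r·a²·sin²ϑ), where √ denotes the real square root. Then L(r) → 0 and U(r) → 0 as r → ∞; consequently, if Ψ ∈ ℝ satisfies L(r) < Ψ < U(r) for all sufficiently large r, then Ψ = 0. -/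

import Mathlib

noncomputable section

open Real Filter

/-- ρ² = r² + a²·cos²ϑ. -/
def rho2 (a r θ : ℝ) : ℝ := r ^ 2 + a ^ 2 * Real.cos θ ^ 2

/-- Lower bound of the interval of coefficients `Ψ` for which
`ξ = V·∂/∂v + Ψ·∂/∂ψ` is timelike at `(r, ϑ)` in stationary Kerr spacetime of mass `m`. -/
def kerrTimelikeLower (m a θ V r : ℝ) : ℝ :=
  (2 * m * r * a * V
      - rho2 a r θ / Real.sin θ * Real.sqrt (V ^ 2 * (r ^ 2 - 2 * m * r + a ^ 2)))
    / ((r ^ 2 + a ^ 2) * rho2 a r θ + 2 * m * r * a ^ 2 * Real.sin θ ^ 2)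

/-- Upper bound of the interval of coefficients `Ψ` for which
`ξ = V·∂/∂v + Ψ·∂/∂ψ` is timelike at `(r, ϑ)` in stationary Kerr spacetime of mass `m`. -/
def kerrTimelikeUpper (m a θ V r : ℝ) : ℝ :=
  (2 * m * r * a * V
      + rho2 a r θ / Real.sin θ * Real.sqrt (V ^ 2 * (r ^ 2 - 2 * m * r + a ^ 2)))
    / ((r ^ 2 + a ^ 2) * rho2 a r θ + 2 * m * r * a ^ 2 * Real.sin θ ^ 2)

lemma aux_pow_div (c : ℝ) (n : ℕ) (hn : 1 ≤ n) :
    Tendsto (fun r : ℝ => c / r ^ n) atTop (nhds 0) :=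
  Tendsto.div_atTop tendsto_const_nhds (tendsto_pow_atTop (by omega))

lemma aux_rho (a θ : ℝ) : Tendsto (fun r : ℝ => rho2 a r θ / r ^ 2) atTop (nhds 1) := by
  have h := (tendsto_const_nhds (x := (1:ℝ)) (f := atTop)).add
    (aux_pow_div (a ^ 2 * Real.cos θ ^ 2) 2 (by norm_num))
  rw [add_zero] at h
  refine h.congr' ?_
  filter_upwards [eventually_gt_atTop (0:ℝ)] with r hr
  have : r ^ 2 ≠ 0 := by positivity
  field_simp [rho2]
  rfl

lemma aux_gamma (a : ℝ) : Tendsto (fun r : ℝ => (r ^ 2 + a ^ 2) / r ^ 2) atTop (nhds 1) := by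
  have h := (tendsto_const_nhds (x := (1:ℝ)) (f := atTop)).add
    (aux_pow_div (a ^ 2) 2 (by norm_num))
  rw [add_zero] at h
  refine h.congr' ?_
  filter_upwards [eventually_gt_atTop (0:ℝ)] with r hr
  have : r ^ 2 ≠ 0 := by positivity
  field_simp

lemma aux_sqrt (m a : ℝ) (hm : 0 < m) :
    Tendsto (fun r : ℝ => Real.sqrt (r ^ 2 - 2 * m * r + a ^ 2) / r ^ 2) atTop (nhds 0) := by
  have h0 : Tendsto (fun r : ℝ => (r + |a|) / r ^ 2) atTop (nhds 0) := by
    have h := (aux_pow_div 1 1 le_rfl).add (aux_pow_div (|a|) 2 (by norm_num))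
    rw [add_zero] at h
    refine h.congr' ?_
    filter_upwards [eventually_gt_atTop (0:ℝ)] with r hr
    have : r ≠ 0 := ne_of_gt hr
    field_simp
  refine tendsto_of_tendsto_of_tendsto_of_le_of_le' tendsto_const_nhds h0 ?_ ?_
  · filter_upwards [eventually_gt_atTop (0:ℝ)] with r hr
    positivity
  · filter_upwards [eventually_gt_atTop (0:ℝ)] with r hr
    have hle : r ^ 2 - 2 * m * r + a ^ 2 ≤ (r + |a|) ^ 2 := by
      nlinarith [abs_nonneg a, hr.le, hm.le, sq_abs a]
    have h2 := Real.sqrt_le_sqrt hle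
    rw [Real.sqrt_sq (by positivity)] at h2
    gcongr

/-- The general fraction with sign `ε` tends to zero. -/
lemma aux_main (m a θ V ε : ℝ) (hm : 0 < m) (hθ : θ ∈ Set.Ioo 0 π) :
    Tendsto (fun r : ℝ =>
      (2 * m * r * a * V
          + ε * (rho2 a r θ / Real.sin θ
              * Real.sqrt (V ^ 2 * (r ^ 2 - 2 * m * r + a ^ 2))))
        / ((r ^ 2 + a ^ 2) * rho2 a r θ + 2 * m * r * a ^ 2 * Real.sin θ ^ 2))
      atTop (nhds 0) := by
  have hs : Real.sin θ ≠ 0 :=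
    ne_of_gt (Real.sin_pos_of_pos_of_lt_pi hθ.1 hθ.2)
  -- numerator over r^4 tends to 0
  have hnum : Tendsto (fun r : ℝ =>
      (2 * m * r * a * V
          + ε * (rho2 a r θ / Real.sin θ
              * Real.sqrt (V ^ 2 * (r ^ 2 - 2 * m * r + a ^ 2)))) / r ^ 4)
      atTop (nhds 0) := by
    have h1 : Tendsto (fun r : ℝ => 2 * m * a * V / r ^ 3) atTop (nhds 0) :=
      aux_pow_div _ 3 (by norm_num)
    have h2 : Tendsto (fun r : ℝ =>
        ε * (Real.sin θ)⁻¹ * (rho2 a r θ / r ^ 2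
          * (|V| * (Real.sqrt (r ^ 2 - 2 * m * r + a ^ 2) / r ^ 2))))
        atTop (nhds 0) := by
      have h := (tendsto_const_nhds (x := ε * (Real.sin θ)⁻¹) (f := atTop)).mul
        ((aux_rho a θ).mul
          ((tendsto_const_nhds (x := |V|) (f := atTop)).mul (aux_sqrt m a hm)))
      rw [show ε * (Real.sin θ)⁻¹ * (1 * (|V| * 0)) = 0 by ring] at h
      exact h
    have h := h1.add h2
    rw [add_zero] at h
    refine h.congr' ?_
    filter_upwards [eventually_gt_atTop (0:ℝ)] with r hr
    have hr4 : r ^ 4 ≠ 0 := by positivity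
    have hr2 : r ^ 2 ≠ 0 := by positivity
    have hr3 : r ^ 3 ≠ 0 := by positivity
    have hsq : Real.sqrt (V ^ 2 * (r ^ 2 - 2 * m * r + a ^ 2))
        = |V| * Real.sqrt (r ^ 2 - 2 * m * r + a ^ 2) := by
      rw [Real.sqrt_mul (sq_nonneg V), Real.sqrt_sq_eq_abs]
    rw [hsq]
    field_simp
  -- denominator over r^4 tends to 1
  have hden : Tendsto (fun r : ℝ =>
      ((r ^ 2 + a ^ 2) * rho2 a r θ + 2 * m * r * a ^ 2 * Real.sin θ ^ 2) / r ^ 4)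
      atTop (nhds 1) := by
    have h := ((aux_gamma a).mul (aux_rho a θ)).add
      (aux_pow_div (2 * m * a ^ 2 * Real.sin θ ^ 2) 3 (by norm_num))
    rw [mul_one, add_zero] at h
    refine h.congr' ?_
    filter_upwards [eventually_gt_atTop (0:ℝ)] with r hr
    have hr2 : r ^ 2 ≠ 0 := by positivity
    have hr3 : r ^ 3 ≠ 0 := by positivity
    have hr4 : r ^ 4 ≠ 0 := by positivity
    field_simp
  have h := hnum.div hden one_ne_zero
  rw [zero_div] at h
  refine h.congr' ?_
  filter_upwards [eventually_gt_atTop (0:ℝ)] with r hr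
  have hr4 : r ^ 4 ≠ 0 := by positivity
  simp only [Pi.div_apply]
  rw [div_div_div_cancel_right₀ hr4]

/-- Uniqueness of the Kodama-like field among timelike Killing fields: both bounds
`L(r)` and `U(r)` tend to `0` as `r → ∞`; consequently any coefficient `Ψ` with
`L(r) < Ψ < U(r)` for all sufficiently large `r` must vanish. -/
theorem kodama_uniqueness (m a θ V : ℝ) (hm : 0 < m) (hθ : θ ∈ Set.Ioo 0 π)
    (hV : V ≠ 0) :
    Tendsto (fun r : ℝ => kerrTimelikeLower m a θ V r) atTop (nhds 0) ∧
    Tendsto (fun r : ℝ => kerrTimelikeUpper m a θ V r) atTop (nhds 0) ∧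
    ∀ Ψ : ℝ,
      (∀ᶠ r in atTop, kerrTimelikeLower m a θ V r < Ψ ∧ Ψ < kerrTimelikeUpper m a θ V r) →
      Ψ = 0 := by
  have hL : Tendsto (fun r : ℝ => kerrTimelikeLower m a θ V r) atTop (nhds 0) := by
    have := aux_main m a θ V (-1) hm hθ
    refine this.congr fun r => ?_
    simp [kerrTimelikeLower]
    ring_nf
  have hU : Tendsto (fun r : ℝ => kerrTimelikeUpper m a θ V r) atTop (nhds 0) := by
    have := aux_main m a θ V 1 hm hθ
    refine this.congr fun r => ?_
    simp [kerrTimelikeUpper]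
  refine ⟨hL, hU, fun Ψ h => ?_⟩
  have h1 : (0:ℝ) ≤ Ψ := le_of_tendsto hL (h.mono fun r hr => hr.1.le)
  have h2 : Ψ ≤ 0 := ge_of_tendsto hU (h.mono fun r hr => hr.2.le)
  linarith
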